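/- If f is a nonnegative random variable in H, then its quantization f̂, defined by (f̂g)(y) = ∫ min(f(x), f(y)) g(x) dν(x), is a bounded self-adjoint operator with ‖f̂‖ ≤ ‖f‖. -/

import Mathlib

/-!
The kernel is dominated by a product: `min (f x) (f y) ≤ √(f x) * √(f y)`. For any kernel with
`‖k x y‖ ≤ s x * s y` and `s ∈ L²`, Cauchy–Schwarz gives `‖(K g) y‖ ≤ |s y| * ‖s‖₂ * ‖g‖₂`, so `K`
is bounded on `L²` with `‖K‖ ≤ ‖s‖₂²`; for `s = √f`, `‖s‖₂² = ‖f‖₁ ≤ ‖f‖₂` on a probability space.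
A Hermitian kernel gives a self-adjoint operator by Fubini.
-/

open MeasureTheory ContinuousLinearMap

noncomputable section

variable {Ω : Type*} [MeasurableSpace Ω]

/-- `T` is the quantization `f̂` of the nonnegative random variable `f`:
the integral operator with kernel `min (f x) (f y)`. -/
def IsQuantization (ν : Measure Ω) (f : Ω → ℝ) (T : Lp ℂ 2 ν →L[ℂ] Lp ℂ 2 ν) : Prop :=
  ∀ g : Lp ℂ 2 ν,
    (T g : Ω → ℂ) =ᵐ[ν] fun y => ∫ x, ((min (f x) (f y) : ℝ) : ℂ) * (g : Ω → ℂ) x ∂ν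

open Filter ComplexConjugate Function

section KernelOperator

variable {𝕜 : Type*} [RCLike 𝕜] {ν : Measure Ω} {k : Ω → Ω → 𝕜} {s : Ω → ℝ} {g h : Ω → 𝕜}

def kernelIntegral (ν : Measure Ω) (k : Ω → Ω → 𝕜) (g : Ω → 𝕜) (y : Ω) : 𝕜 :=
  ∫ x, k x y * g x ∂ν

theorem kernelIntegral_congr_ae (hgh : g =ᵐ[ν] h) : kernelIntegral ν k g = kernelIntegral ν k h :=
  funext fun _ => integral_congr_ae <| hgh.mono fun _ hx => congrArg _ hx

theorem kernelIntegral_smul (c : 𝕜) : kernelIntegral ν k (c • g) = c • kernelIntegral ν k g := by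
  funext y
  simp only [kernelIntegral, Pi.smul_apply, smul_eq_mul, ← integral_const_mul, mul_left_comm]

theorem integrable_mul_norm (hs : MemLp s 2 ν) (hg : MemLp g 2 ν) :
    Integrable (fun x => s x * ‖g x‖) ν :=
  hs.integrable_mul hg.norm

theorem norm_kernelIntegral_le (hs : MemLp s 2 ν) (hks : ∀ x y, ‖k x y‖ ≤ s x * s y)
    (hg : MemLp g 2 ν) (y : Ω) :
    ‖kernelIntegral ν k g y‖ ≤ ‖(∫ x, s x * ‖g x‖ ∂ν) * s y‖ := by
  refine (norm_integral_le_of_norm_le ((integrable_mul_norm hs hg).mul_const (s y))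
    (.of_forall fun x => ?_)).trans ?_
  · rw [norm_mul, mul_right_comm]
    exact mul_le_mul_of_nonneg_right (hks x y) (norm_nonneg _)
  · rw [integral_mul_const]; exact le_abs_self _

theorem enorm_integral_mul_norm_le (hs : MemLp s 2 ν) (hg : MemLp g 2 ν) :
    ‖∫ x, s x * ‖g x‖ ∂ν‖ₑ ≤ eLpNorm s 2 ν * eLpNorm g 2 ν := by
  calc ‖∫ x, s x * ‖g x‖ ∂ν‖ₑ ≤ eLpNorm (s • fun x => ‖g x‖) 1 ν := by
        rw [eLpNorm_one_eq_lintegral_enorm]; exact enorm_integral_le_lintegral_enorm _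
    _ ≤ eLpNorm s 2 ν * eLpNorm g 2 ν := by
        simpa only [eLpNorm_norm] using eLpNorm_smul_le_mul_eLpNorm hg.1.norm hs.1

theorem eLpNorm_kernelIntegral_le (hs : MemLp s 2 ν) (hks : ∀ x y, ‖k x y‖ ≤ s x * s y)
    (hg : MemLp g 2 ν) :
    eLpNorm (kernelIntegral ν k g) 2 ν ≤ eLpNorm s 2 ν ^ 2 * eLpNorm g 2 ν :=
  calc eLpNorm (kernelIntegral ν k g) 2 ν
      ≤ eLpNorm ((∫ x, s x * ‖g x‖ ∂ν) • s) 2 ν := eLpNorm_mono (norm_kernelIntegral_le hs hks hg)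
    _ = ‖∫ x, s x * ‖g x‖ ∂ν‖ₑ * eLpNorm s 2 ν := eLpNorm_const_smul _ _ _ _
    _ ≤ eLpNorm s 2 ν * eLpNorm g 2 ν * eLpNorm s 2 ν := by
        gcongr; exact enorm_integral_mul_norm_le hs hg
    _ = eLpNorm s 2 ν ^ 2 * eLpNorm g 2 ν := by ring

variable [SFinite ν]

theorem ae_integrable_kernel_mul (hk : AEStronglyMeasurable (uncurry k) (ν.prod ν))
    (hs : MemLp s 2 ν) (hks : ∀ x y, ‖k x y‖ ≤ s x * s y) (hg : MemLp g 2 ν) :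
    ∀ᵐ y ∂ν, Integrable (fun x => k x y * g x) ν := by
  filter_upwards [hk.prod_swap.prodMk_left] with y hky
  refine ((integrable_mul_norm hs hg).const_mul (s y)).mono' (hky.mul hg.1) <|
    .of_forall fun x => ?_
  calc ‖k x y * g x‖ ≤ s x * s y * ‖g x‖ := by
        rw [norm_mul]; exact mul_le_mul_of_nonneg_right (hks x y) (norm_nonneg _)
    _ = s y * (s x * ‖g x‖) := by ring

theorem kernelIntegral_add_ae (hk : AEStronglyMeasurable (uncurry k) (ν.prod ν))
    (hs : MemLp s 2 ν) (hks : ∀ x y, ‖k x y‖ ≤ s x * s y) (hg : MemLp g 2 ν) (hh : MemLp h 2 ν) :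
    kernelIntegral ν k (g + h) =ᵐ[ν] kernelIntegral ν k g + kernelIntegral ν k h := by
  filter_upwards [ae_integrable_kernel_mul hk hs hks hg, ae_integrable_kernel_mul hk hs hks hh]
    with y hgy hhy
  simp only [kernelIntegral, Pi.add_apply, mul_add, integral_add hgy hhy]

theorem aestronglyMeasurable_kernelIntegral
    (hk : AEStronglyMeasurable (uncurry k) (ν.prod ν)) (hg : AEStronglyMeasurable g ν) :
    AEStronglyMeasurable (kernelIntegral ν k g) ν :=
  (hk.prod_swap.mul (hg.comp_quasiMeasurePreserving Measure.quasiMeasurePreserving_snd)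
    ).integral_prod_right'

theorem memLp_kernelIntegral (hk : AEStronglyMeasurable (uncurry k) (ν.prod ν))
    (hs : MemLp s 2 ν) (hks : ∀ x y, ‖k x y‖ ≤ s x * s y) (hg : MemLp g 2 ν) :
    MemLp (kernelIntegral ν k g) 2 ν :=
  ⟨aestronglyMeasurable_kernelIntegral hk hg.1, (eLpNorm_kernelIntegral_le hs hks hg).trans_lt <|
    ENNReal.mul_lt_top (ENNReal.pow_lt_top hs.2) hg.2⟩

theorem integral_conj_kernelIntegral_mul (hk : AEStronglyMeasurable (uncurry k) (ν.prod ν))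
    (hs : MemLp s 2 ν) (hks : ∀ x y, ‖k x y‖ ≤ s x * s y) (hk_conj : ∀ x y, conj (k x y) = k y x)
    (hg : MemLp g 2 ν) (hh : MemLp h 2 ν) :
    ∫ y, conj (kernelIntegral ν k g y) * h y ∂ν = ∫ x, conj (g x) * kernelIntegral ν k h x ∂ν := by
  have hF : Integrable (uncurry fun y x => k y x * (conj (g x) * h y)) (ν.prod ν) := by
    have hg_conj : AEStronglyMeasurable (fun x => conj (g x)) ν :=
      RCLike.continuous_conj.comp_aestronglyMeasurable hg.1
    refine ((integrable_mul_norm hs hh).mul_prod (integrable_mul_norm hs hg)).mono'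
      (hk.mul <| (hg_conj.comp_quasiMeasurePreserving Measure.quasiMeasurePreserving_snd).mul
        (hh.1.comp_quasiMeasurePreserving Measure.quasiMeasurePreserving_fst))
      (.of_forall fun ⟨y, x⟩ => ?_)
    simp only [uncurry, norm_mul, RCLike.norm_conj]
    calc ‖k y x‖ * (‖g x‖ * ‖h y‖) ≤ s y * s x * (‖g x‖ * ‖h y‖) := by gcongr; exact hks y x
      _ = s y * ‖h y‖ * (s x * ‖g x‖) := by ring
  calc ∫ y, conj (kernelIntegral ν k g y) * h y ∂ν
      = ∫ y, ∫ x, k y x * (conj (g x) * h y) ∂ν ∂ν := by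
        simp only [kernelIntegral, ← integral_conj, ← integral_mul_const, map_mul, hk_conj,
          mul_assoc]
    _ = ∫ x, ∫ y, k y x * (conj (g x) * h y) ∂ν ∂ν := integral_integral_swap hF
    _ = ∫ x, conj (g x) * kernelIntegral ν k h x ∂ν := by
        simp only [kernelIntegral, ← integral_const_mul, mul_left_comm]

def kernelOperator (hk : AEStronglyMeasurable (uncurry k) (ν.prod ν)) (hs : MemLp s 2 ν)
    (hks : ∀ x y, ‖k x y‖ ≤ s x * s y) : Lp 𝕜 2 ν →L[𝕜] Lp 𝕜 2 ν :=
  LinearMap.mkContinuous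
    { toFun g := (memLp_kernelIntegral hk hs hks (Lp.memLp g)).toLp _
      map_add' g h := by
        rw [← MemLp.toLp_add]
        refine MemLp.toLp_congr _ _ ?_
        rw [kernelIntegral_congr_ae (Lp.coeFn_add g h)]
        exact kernelIntegral_add_ae hk hs hks (Lp.memLp g) (Lp.memLp h)
      map_smul' c g := by
        rw [RingHom.id_apply, ← MemLp.toLp_const_smul]
        refine MemLp.toLp_congr _ _ ?_
        rw [kernelIntegral_congr_ae (Lp.coeFn_smul c g), kernelIntegral_smul] }
    ((eLpNorm s 2 ν).toReal ^ 2) fun g => by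
      rw [LinearMap.coe_mk, AddHom.coe_mk, Lp.norm_toLp, Lp.norm_def, ← ENNReal.toReal_pow,
        ← ENNReal.toReal_mul]
      exact ENNReal.toReal_mono
        (ENNReal.mul_ne_top (ENNReal.pow_ne_top hs.2.ne) (Lp.eLpNorm_ne_top g))
        (eLpNorm_kernelIntegral_le hs hks (Lp.memLp g))

variable {hk : AEStronglyMeasurable (uncurry k) (ν.prod ν)} {hs : MemLp s 2 ν}
  {hks : ∀ x y, ‖k x y‖ ≤ s x * s y}

theorem coeFn_kernelOperator (g : Lp 𝕜 2 ν) :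
    kernelOperator hk hs hks g =ᵐ[ν] kernelIntegral ν k g :=
  (memLp_kernelIntegral hk hs hks (Lp.memLp g)).coeFn_toLp

theorem norm_kernelOperator_le : ‖kernelOperator hk hs hks‖ ≤ (eLpNorm s 2 ν).toReal ^ 2 :=
  LinearMap.mkContinuous_norm_le _ (by positivity) _

theorem isSelfAdjoint_kernelOperator (hk_conj : ∀ x y, conj (k x y) = k y x) :
    IsSelfAdjoint (kernelOperator hk hs hks) := by
  rw [ContinuousLinearMap.isSelfAdjoint_iff_isSymmetric]
  intro g h
  simp only [coe_coe, L2.inner_def, RCLike.inner_apply']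
  calc ∫ y, conj (kernelOperator hk hs hks g y) * h y ∂ν
      = ∫ y, conj (kernelIntegral ν k g y) * h y ∂ν := by
        refine integral_congr_ae ?_
        filter_upwards [coeFn_kernelOperator g] with y hy
        rw [hy]
    _ = ∫ x, conj (g x) * kernelIntegral ν k h x ∂ν :=
        integral_conj_kernelIntegral_mul hk hs hks hk_conj (Lp.memLp g) (Lp.memLp h)
    _ = ∫ x, conj (g x) * kernelOperator hk hs hks h x ∂ν := by
        refine integral_congr_ae ?_
        filter_upwards [coeFn_kernelOperator h] with x hx
        rw [hx]

end KernelOperator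

theorem min_le_sqrt_mul_sqrt {a b : ℝ} (ha : 0 ≤ a) (hb : 0 ≤ b) : min a b ≤ √a * √b := by
  rw [← Real.sqrt_mul ha, Real.le_sqrt (le_min ha hb) (mul_nonneg ha hb), sq]
  exact mul_le_mul (min_le_left a b) (min_le_right a b) (le_min ha hb) ha

theorem eLpNorm_sqrt_sq_le {ν : Measure Ω} (f : Ω → ℝ) :
    eLpNorm (fun x => √(f x)) 2 ν ^ 2 ≤ eLpNorm f 1 ν := by
  have h := eLpNorm_norm_rpow (p := 1) (μ := ν) (fun x => √(f x)) two_pos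
  rw [one_mul, ENNReal.ofReal_ofNat, ENNReal.rpow_two] at h
  rw [← h]
  refine eLpNorm_mono fun x => ?_
  rw [Real.rpow_two, norm_pow, norm_norm, Real.norm_eq_abs, sq_abs, Real.sq_sqrt',
    Real.norm_eq_abs]
  exact max_le (le_abs_self _) (abs_nonneg _)

theorem memLp_two_sqrt_of_memLp_one {ν : Measure Ω} {f : Ω → ℝ} (hf : MemLp f 1 ν) :
    MemLp (fun x => √(f x)) 2 ν :=
  ⟨Real.continuous_sqrt.comp_aestronglyMeasurable hf.1,
    (ENNReal.pow_lt_top_iff.1 ((eLpNorm_sqrt_sq_le f).trans_lt hf.2)).resolve_right two_ne_zero⟩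

theorem stmt9 (ν : Measure Ω) [IsProbabilityMeasure ν] (f : Ω → ℝ) (hf0 : ∀ x, 0 ≤ f x)
    (hf : MemLp (fun x => (f x : ℂ)) 2 ν) :
    ∃ T : Lp ℂ 2 ν →L[ℂ] Lp ℂ 2 ν, IsQuantization ν f T ∧ IsSelfAdjoint T ∧
      ‖T‖ ≤ ‖hf.toLp (fun x => (f x : ℂ))‖ := by
  have hf_real : MemLp f 2 ν := by simpa using hf.re
  have hf_norm : eLpNorm (fun x => (f x : ℂ)) 2 ν = eLpNorm f 2 ν :=
    eLpNorm_congr_norm_ae (.of_forall fun x => Complex.norm_real (f x))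
  have hs : MemLp (fun x => √(f x)) 2 ν :=
    memLp_two_sqrt_of_memLp_one (hf_real.mono_exponent one_le_two)
  have hk : AEStronglyMeasurable (uncurry fun x y => ((min (f x) (f y) : ℝ) : ℂ)) (ν.prod ν) :=
    Complex.continuous_ofReal.comp_aestronglyMeasurable <|
      continuous_min.comp_aestronglyMeasurable <|
        (hf_real.1.comp_quasiMeasurePreserving Measure.quasiMeasurePreserving_fst).prodMk
          (hf_real.1.comp_quasiMeasurePreserving Measure.quasiMeasurePreserving_snd)
  have hks (x y : Ω) : ‖((min (f x) (f y) : ℝ) : ℂ)‖ ≤ √(f x) * √(f y) := by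
    rw [Complex.norm_real, Real.norm_of_nonneg (le_min (hf0 x) (hf0 y))]
    exact min_le_sqrt_mul_sqrt (hf0 x) (hf0 y)
  refine ⟨kernelOperator hk hs hks, coeFn_kernelOperator,
    isSelfAdjoint_kernelOperator fun x y => by rw [Complex.conj_ofReal, min_comm], ?_⟩
  refine norm_kernelOperator_le.trans ?_
  rw [Lp.norm_toLp, hf_norm, ← ENNReal.toReal_pow]
  exact ENNReal.toReal_mono hf_real.2.ne <|
    (eLpNorm_sqrt_sq_le f).trans (eLpNorm_le_eLpNorm_of_exponent_le one_le_two hf_real.1)
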